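/- arXiv:2605.20347 — 6 statements merged into one kernel-verified Lean document; each statement's English description precedes it below -/
import Mathlib

section
/- The symmetrization of the mean squared error loss on softmax outputs, L(z,y) = ‖e_y - s(z)‖² where s is the softmax function and e_y the one-hot vector, equals 2(1/C - p(y|z)) + c(z) restricted to its symmetric part; concretely L_sym(z,y) = 2((1/C)∑_k p(k|z)) - 2p(y|z) = (2/C) - 2p(y|z), which is equivalent (up to additive constant and positive scalar) to the MAE loss 1 - p(y|z). -/
open Real

/-- The symmetrization of the mean squared error on softmax outputs equals
`2/C - 2 p(y|z)`, which is an affine rescaling (with positive scalar) of the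
MAE loss `1 - p(y|z)`. -/
theorem stmt_3 (C : ℕ) (hC : 1 ≤ C) :
    let p : (Fin C → ℝ) → Fin C → ℝ :=
      fun z k => Real.exp (z k) / ∑ j, Real.exp (z j)
    let e : Fin C → Fin C → ℝ := fun y k => if k = y then 1 else 0
    let L : (Fin C → ℝ) → Fin C → ℝ :=
      fun z y => ∑ k, (e y k - p z k) ^ 2
    (∀ (z : Fin C → ℝ) (y : Fin C),
      L z y - (1 / (C : ℝ)) * ∑ k, L z k = 2 / (C : ℝ) - 2 * p z y) ∧
    (∃ a : ℝ, 0 < a ∧ ∃ b : ℝ, ∀ (z : Fin C → ℝ) (y : Fin C),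
      L z y - (1 / (C : ℝ)) * ∑ k, L z k = a * (1 - p z y) + b) := by
  intro p e L
  haveI : NeZero C := ⟨by omega⟩
  have hCne : (C : ℝ) ≠ 0 := Nat.cast_ne_zero.mpr (by omega)
  have hsum : ∀ z : Fin C → ℝ, ∑ k, p z k = 1 := by
    intro z
    have hpos : 0 < ∑ j, Real.exp (z j) :=
      Finset.sum_pos (fun j _ => Real.exp_pos _) Finset.univ_nonempty
    simp only [p]
    rw [← Finset.sum_div, div_eq_one_iff_eq hpos.ne']
  have hL : ∀ (z : Fin C → ℝ) (y : Fin C),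
      L z y = (∑ k, (p z k) ^ 2) - 2 * p z y + 1 := by
    intro z y
    have expand : ∀ k, (e y k - p z k) ^ 2 =
        ((if k = y then (1:ℝ) else 0) - 2 * (if k = y then p z k else 0)) + (p z k) ^ 2 := by
      intro k
      by_cases h : k = y <;> simp [e, h] <;> ring
    simp only [L]
    rw [Finset.sum_congr rfl (fun k _ => expand k)]
    rw [Finset.sum_add_distrib, Finset.sum_sub_distrib, ← Finset.mul_sum,
      Finset.sum_ite_eq' Finset.univ y (fun _ => (1:ℝ)),
      Finset.sum_ite_eq' Finset.univ y (fun k => p z k)]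
    simp
    ring
  have key : ∀ (z : Fin C → ℝ) (y : Fin C),
      L z y - (1 / (C : ℝ)) * ∑ k, L z k = 2 / (C : ℝ) - 2 * p z y := by
    intro z y
    have hsumL : ∑ k, L z k = (C : ℝ) * (∑ k, (p z k) ^ 2) - 2 + (C : ℝ) := by
      rw [Finset.sum_congr rfl (fun k _ => hL z k)]
      rw [Finset.sum_add_distrib, Finset.sum_sub_distrib, ← Finset.mul_sum, hsum]
      simp [Finset.card_univ]
    rw [hL, hsumL]
    field_simp
    ring
  refine ⟨key, 2, by norm_num, 2 / (C : ℝ) - 2, fun z y => ?_⟩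
  rw [key z y]
  ring
end

section
/- Let L(z,y) = ∑_{k=1}^C a_k(y) z_k be a linear loss that is symmetric, non-increasing in z_y, invariant to permutations, and not identically zero. Then there exists a constant c > 0 such that L(z,y) = c·(-z_y + (1/C)∑_{k=1}^C z_k) for all z, y. -/
/-- The multi-class unhinged loss is the unique (up to a positive multiplicative
constant) non-trivial, non-increasing, linear multi-class symmetric loss
satisfying invariance to permutations. -/
theorem stmt_6 (C : ℕ) (hC : 2 ≤ C) (a : Fin C → Fin C → ℝ)
    (L : (Fin C → ℝ) → Fin C → ℝ)
    (hlin : ∀ z y, L z y = ∑ k, a k y * z k)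
    (hsym : ∃ K : ℝ, ∀ z, ∑ y, L z y = K)
    (hmono : ∀ (y : Fin C) (z z' : Fin C → ℝ),
      (∀ k, k ≠ y → z k = z' k) → z y ≤ z' y → L z' y ≤ L z y)
    (hperm : ∀ (τ : Equiv.Perm (Fin C)) (z : Fin C → ℝ) (y : Fin C),
      L (fun i => z (τ.symm i)) (τ y) = L z y)
    (hnontriv : ¬ ∀ z y, L z y = 0) :
    ∃ c : ℝ, 0 < c ∧ ∀ (z : Fin C → ℝ) (y : Fin C),
      L z y = c * (-z y + (1 / (C : ℝ)) * ∑ k, z k) := by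
  set n : ℝ := (C : ℝ) with hn
  have hn2 : (2 : ℝ) ≤ n := by rw [hn]; exact_mod_cast hC
  have hn0 : n ≠ 0 := by linarith
  have hn1 : n - 1 ≠ 0 := by intro h; linarith
  -- evaluate L on basis vectors
  have hbasis : ∀ (k y : Fin C), L (Pi.single k 1) y = a k y := by
    intro k y
    rw [hlin]
    rw [Finset.sum_eq_single k]
    · simp
    · intro j _ hj; simp [Pi.single_eq_of_ne hj]
    · intro h; exact absurd (Finset.mem_univ k) h
  -- permutation invariance of coefficients
  have ha : ∀ (τ : Equiv.Perm (Fin C)) (k y : Fin C), a (τ k) (τ y) = a k y := by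
    intro τ k y
    have h1 := hperm τ (Pi.single k 1) y
    have e1 : (fun i => Pi.single (M := fun _ : Fin C => ℝ) k 1 (τ.symm i)) = Pi.single (τ k) 1 := by
      funext i
      by_cases h : i = τ k
      · subst h; rw [Equiv.symm_apply_apply]; simp
      · rw [Pi.single_eq_of_ne h, Pi.single_eq_of_ne]
        intro hc
        exact h (by rw [← hc]; simp)
    rw [e1, hbasis, hbasis] at h1
    exact h1
  -- two distinguished indices
  have h0C : 0 < C := by omega
  have h1C : 1 < C := by omega
  set y0 : Fin C := ⟨0, h0C⟩ with hy0
  set k0 : Fin C := ⟨1, h1C⟩ with hk0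
  have hk0y0 : k0 ≠ y0 := by
    intro h
    have := Fin.mk.injEq 1 h1C 0 h0C ▸ congrArg Fin.val h
    simp at this
  set α : ℝ := a y0 y0 with hα
  set β : ℝ := a k0 y0 with hβ
  -- all coefficients are α or β
  have hval : ∀ k y : Fin C, a k y = if k = y then α else β := by
    intro k y
    by_cases h : k = y
    · subst h
      rw [if_pos rfl, hα]
      have := ha (Equiv.swap y0 k) y0 y0
      rwa [Equiv.swap_apply_left] at this
    · rw [if_neg h, hβ]
      set τ1 := Equiv.swap y0 y with hτ1
      set k1 := τ1 k0 with hk1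
      have hτ1y0 : τ1 y0 = y := Equiv.swap_apply_left y0 y
      have hyk1 : y ≠ k1 := by
        intro hc
        exact hk0y0 (τ1.injective (by rw [← hk1, ← hc, hτ1y0])).symm
      have hyk : y ≠ k := fun hc => h hc.symm
      set τ2 := Equiv.swap k1 k with hτ2
      set τ := τ1.trans τ2 with hτ
      have hτk0 : τ k0 = k := by
        simp only [hτ, Equiv.trans_apply, ← hk1, hτ2]
        exact Equiv.swap_apply_left k1 k
      have hτy0 : τ y0 = y := by
        simp only [hτ, Equiv.trans_apply, hτ1y0, hτ2]
        exact Equiv.swap_apply_of_ne_of_ne hyk1 hyk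
      have := ha τ k0 y0
      rwa [hτk0, hτy0] at this
  -- the constant K is 0
  obtain ⟨K, hK⟩ := hsym
  have hK0 : K = 0 := by
    have h := hK 0
    simp only [hlin, Pi.zero_apply, mul_zero, Finset.sum_const_zero] at h
    exact h.symm
  -- symmetry relation on coefficients
  have hrel : (α - β) + n * β = 0 := by
    have h := hK (Pi.single y0 1)
    simp only [hlin, hK0] at h
    have hb : ∀ y : Fin C, ∑ k, a k y * (Pi.single y0 1 : Fin C → ℝ) k = a y0 y := by
      intro y
      rw [Finset.sum_eq_single y0]
      · simp
      · intro j _ hj; simp [Pi.single_eq_of_ne hj]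
      · intro hmem; exact absurd (Finset.mem_univ y0) hmem
    rw [Finset.sum_congr rfl (fun y _ => hb y)] at h
    have hsplit : ∀ y : Fin C, a y0 y = (if y0 = y then α - β else 0) + β := by
      intro y
      rw [hval]
      by_cases hcy : y0 = y <;> simp [hcy] <;> ring
    rw [Finset.sum_congr rfl (fun y _ => hsplit y), Finset.sum_add_distrib,
      Finset.sum_ite_eq Finset.univ y0, if_pos (Finset.mem_univ y0),
      Finset.sum_const, Finset.card_univ, Fintype.card_fin, nsmul_eq_mul] at h
    linarith [h]
  -- monotonicity gives α ≤ 0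
  have hαle : α ≤ 0 := by
    have h := hmono y0 0 (Pi.single y0 1) (fun k hk => by simp [Pi.single_eq_of_ne hk])
      (by simp)
    rw [hbasis] at h
    have h0 : L 0 y0 = 0 := by
      simp [hlin]
    rw [h0] at h
    exact h
  -- general formula for L
  have key : ∀ (z : Fin C → ℝ) (y : Fin C),
      L z y = (α - β) * z y + β * ∑ k, z k := by
    intro z y
    rw [hlin]
    have hsplit : ∀ k : Fin C, a k y * z k
        = (if k = y then (α - β) * z k else 0) + β * z k := by
      intro k
      rw [hval]
      by_cases hcy : k = y <;> simp [hcy] <;> ring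
    rw [Finset.sum_congr rfl (fun k _ => hsplit k), Finset.sum_add_distrib,
      Finset.sum_ite_eq' Finset.univ y, if_pos (Finset.mem_univ y),
      ← Finset.mul_sum]
  -- nontriviality gives α < 0
  have hαlt : α < 0 := by
    rcases lt_or_eq_of_le hαle with h | h
    · exact h
    · exfalso
      apply hnontriv
      intro z y
      have hβ0 : β = 0 := by
        rw [← h] at hrel
        have : β * (n - 1) = 0 := by linarith
        rcases mul_eq_zero.mp this with h' | h'
        · exact h'
        · exact absurd h' hn1
      rw [key, h, hβ0]
      ring
  refine ⟨-α * n / (n - 1), ?_, ?_⟩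
  · apply div_pos
    · nlinarith
    · have : (1:ℝ) < n := by linarith
      linarith
  · intro z y
    rw [key]
    have hβval : β = -α / (n - 1) := by
      field_simp
      linarith [hrel]
    rw [hβval, hn]
    have hC1 : (C:ℝ) - 1 ≠ 0 := hn1
    have hC0 : (C:ℝ) ≠ 0 := hn0
    field_simp
    ring
end

section
/- If L(z,y) is symmetric and L(z,y) is a convex function of z for every y, then L(z,y) is an affine function of z for every y. -/
private lemma affine_of_convex_concave {n : ℕ} (f : (Fin n → ℝ) → ℝ)
    (hcv : ConvexOn ℝ Set.univ f) (hcc : ConcaveOn ℝ Set.univ f) :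
    ∃ (a : Fin n → ℝ) (b : ℝ), ∀ z, f z = (∑ k, a k * z k) + b := by
  set g : (Fin n → ℝ) → ℝ := fun x => f x - f 0 with hg
  have key : ∀ (x y : Fin n → ℝ) (t : ℝ), 0 ≤ t → t ≤ 1 →
      f (t • x + (1 - t) • y) = t * f x + (1 - t) * f y := by
    intro x y t ht ht1
    obtain ⟨-, hcv2⟩ := hcv
    obtain ⟨-, hcc2⟩ := hcc
    have hb : (0:ℝ) ≤ 1 - t := by linarith
    have hab : t + (1 - t) = 1 := by ring
    have h1 := hcv2 (Set.mem_univ x) (Set.mem_univ y) ht hb hab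
    have h2 := hcc2 (Set.mem_univ x) (Set.mem_univ y) ht hb hab
    simp only [smul_eq_mul] at h1 h2
    linarith
  have h1 : ∀ (x y : Fin n → ℝ) (t : ℝ), 0 ≤ t → t ≤ 1 →
      g (t • x + (1 - t) • y) = t * g x + (1 - t) * g y := by
    intro x y t ht ht1
    simp only [hg, key x y t ht ht1]; ring
  have hg0 : g 0 = 0 := by simp [hg]
  have hsmall : ∀ (x : Fin n → ℝ) (t : ℝ), 0 ≤ t → t ≤ 1 → g (t • x) = t * g x := by
    intro x t ht ht1
    have := h1 x 0 t ht ht1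
    simpa [hg0] using this
  have hbig : ∀ (x : Fin n → ℝ) (s : ℝ), 1 ≤ s → g (s • x) = s * g x := by
    intro x s hs
    have hs0 : (0:ℝ) < s := by linarith
    have := hsmall (s • x) (1/s) (by positivity) (by
      rw [div_le_one hs0]; linarith)
    rw [smul_smul, one_div, inv_mul_cancel₀ hs0.ne', one_smul] at this
    field_simp at this ⊢
    linarith
  have hneg : ∀ (x : Fin n → ℝ), g (-x) = - g x := by
    intro x
    have := h1 x (-x) (1/2) (by norm_num) (by norm_num)
    have hx : (1/2 : ℝ) • x + (1 - 1/2 : ℝ) • (-x) = 0 := by module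
    rw [hx, hg0] at this
    norm_num at this
    simp only [hg] at this ⊢
    linarith
  have hhom : ∀ (c : ℝ) (x : Fin n → ℝ), g (c • x) = c * g x := by
    intro c x
    rcases le_or_gt 0 c with hc | hc
    · rcases le_or_gt c 1 with hc1 | hc1
      · exact hsmall x c hc hc1
      · exact hbig x c hc1.le
    · have h2 : g ((-c) • x) = (-c) * g x := by
        rcases le_or_gt (-c) 1 with hc1 | hc1
        · exact hsmall x (-c) (by linarith) hc1
        · exact hbig x (-c) hc1.le
      have : c • x = -((-c) • x) := by module
      rw [this, hneg, h2]; ring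
  have hadd : ∀ x y : Fin n → ℝ, g (x + y) = g x + g y := by
    intro x y
    have := h1 ((2:ℝ) • x) ((2:ℝ) • y) (1/2) (by norm_num) (by norm_num)
    have hx : (1/2 : ℝ) • ((2:ℝ) • x) + (1 - 1/2 : ℝ) • ((2:ℝ) • y) = x + y := by module
    rw [hx] at this
    rw [this, hhom 2 x, hhom 2 y]; ring
  have hsum : ∀ (s : Finset (Fin n)) (h : Fin n → (Fin n → ℝ)),
      g (∑ i ∈ s, h i) = ∑ i ∈ s, g (h i) := by
    intro s
    induction s using Finset.induction with
    | empty => simp [hg0]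
    | insert _ _ hmem ih => intro h; simp [Finset.sum_insert hmem, hadd, ih]
  refine ⟨fun k => g (Pi.single k 1), f 0, fun z => ?_⟩
  have hz : z = ∑ k, z k • (Pi.single k 1 : Fin n → ℝ) := by
    conv_lhs => rw [← Finset.univ_sum_single z]
    congr 1; funext k
    rw [← Pi.single_smul, smul_eq_mul, mul_one]
  have : g z = ∑ k, (g (Pi.single k 1)) * z k := by
    conv_lhs => rw [hz]
    rw [hsum]
    congr 1; funext k
    rw [hhom]; ring
  simp only [hg] at this
  linarith [this]

/-- A symmetric loss that is convex in `z` for every label must be affine in `z`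
for every label. -/
theorem stmt_7 (C : ℕ) (hC : 1 ≤ C) (L : (Fin C → ℝ) → Fin C → ℝ)
    (hsym : ∃ K : ℝ, ∀ z, ∑ k, L z k = K)
    (hconv : ∀ y : Fin C, ConvexOn ℝ Set.univ (fun z => L z y)) :
    ∀ y : Fin C, ∃ (a : Fin C → ℝ) (b : ℝ),
      ∀ z : Fin C → ℝ, L z y = (∑ k, a k * z k) + b := by
  obtain ⟨K, hK⟩ := hsym
  intro y
  have hconcave : ConcaveOn ℝ Set.univ (fun z => L z y) := by
    have heq : (fun z => L z y) = fun z => K - ∑ k ∈ Finset.univ.erase y, L z k := by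
      funext z
      have := hK z
      rw [← Finset.sum_erase_add _ _ (Finset.mem_univ y)] at this
      linarith
    rw [heq]
    have hsumconv : ConvexOn ℝ Set.univ (fun z => ∑ k ∈ Finset.univ.erase y, L z k) := by
      have : ∀ (s : Finset (Fin C)), ConvexOn ℝ Set.univ (fun z => ∑ k ∈ s, L z k) := by
        intro s
        induction s using Finset.induction with
        | empty => simpa using convexOn_const (0:ℝ) convex_univ
        | insert _ _ hmem ih =>
          simp only [Finset.sum_insert hmem]
          exact (hconv _).add ih
      exact this _
    exact (concaveOn_const K convex_univ).sub hsumconv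
  exact affine_of_convex_concave _ (hconv y) hconcave
end

section
/- The multi-class unhinged loss is, up to additive and positive multiplicative constants, the unique loss function L : ℝ^C × Fin C → ℝ that is convex in z for every y, non-trivial (non-constant), non-increasing in z_y, symmetric, and invariant to permutations. -/
/-- Up to an additive constant and a positive multiplicative constant, the
multi-class unhinged loss is the unique convex, non-trivial, non-increasing,
symmetric loss invariant to permutations. -/
theorem stmt_8 (C : ℕ) (hC : 2 ≤ C) (L : (Fin C → ℝ) → Fin C → ℝ)
    (hconv : ∀ y : Fin C, ConvexOn ℝ Set.univ (fun z => L z y))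
    (hnontriv : ¬ ∃ b : ℝ, ∀ z y, L z y = b)
    (hmono : ∀ (y : Fin C) (z z' : Fin C → ℝ),
      (∀ k, k ≠ y → z k = z' k) → z y ≤ z' y → L z' y ≤ L z y)
    (hsym : ∃ K : ℝ, ∀ z, ∑ k, L z k = K)
    (hperm : ∀ (τ : Equiv.Perm (Fin C)) (z : Fin C → ℝ) (y : Fin C),
      L (fun i => z (τ.symm i)) (τ y) = L z y) :
    ∃ c : ℝ, 0 < c ∧ ∃ d : ℝ, ∀ (z : Fin C → ℝ) (y : Fin C),
      L z y = c * (-z y + (1 / (C : ℝ)) * ∑ k, z k) + d := by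
  obtain ⟨K, hK⟩ := hsym
  -- Step 1: affine combination equality
  have haff : ∀ (y : Fin C) (a b : ℝ), 0 ≤ a → 0 ≤ b → a + b = 1 →
      ∀ z w : Fin C → ℝ, L (a • z + b • w) y = a * L z y + b * L w y := by
    intro y a b ha hb hab z w
    have h1 : ∀ k : Fin C, L (a • z + b • w) k ≤ a * L z k + b * L w k := by
      intro k
      have := (hconv k).2 (Set.mem_univ z) (Set.mem_univ w) ha hb hab
      simpa [smul_eq_mul] using this
    have h2 : ∑ k, (a * L z k + b * L w k - L (a • z + b • w) k) = 0 := by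
      rw [Finset.sum_sub_distrib, Finset.sum_add_distrib, ← Finset.mul_sum,
        ← Finset.mul_sum, hK, hK, hK]
      linear_combination K * hab
    have h3 := (Finset.sum_eq_zero_iff_of_nonneg
      (fun k _ => by linarith [h1 k])).1 h2 y (Finset.mem_univ y)
    linarith
  -- Step 2: g y z := L z y - L 0 y is additive and homogeneous
  set g : Fin C → (Fin C → ℝ) → ℝ := fun y z => L z y - L 0 y with hg
  have hg01 : ∀ (y : Fin C) (a : ℝ), 0 ≤ a → a ≤ 1 → ∀ z, g y (a • z) = a * g y z := by
    intro y a ha ha1 z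
    have := haff y a (1 - a) ha (by linarith) (by ring) z 0
    simp only [smul_zero, add_zero] at this
    simp only [hg]
    rw [this]; ring
  have hgadd : ∀ (y : Fin C) (z w : Fin C → ℝ), g y (z + w) = g y z + g y w := by
    intro y z w
    have h1 := haff y (1/2) (1/2) (by norm_num) (by norm_num) (by norm_num) z w
    have h2 := hg01 y (1/2) (by norm_num) (by norm_num) (z + w)
    rw [smul_add] at h2
    simp only [hg] at h2 ⊢
    linarith [h1, h2]
  -- package as AddMonoidHom for sum/neg/nsmul lemmas
  have hG : ∀ y : Fin C, ∃ G : (Fin C → ℝ) →+ ℝ, ∀ z, G z = g y z := by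
    intro y
    exact ⟨AddMonoidHom.mk' (g y) (hgadd y), fun z => rfl⟩
  have hgsum : ∀ (y : Fin C) {ι : Type} (s : Finset ι) (f : ι → (Fin C → ℝ)),
      g y (∑ i ∈ s, f i) = ∑ i ∈ s, g y (f i) := by
    intro y ι s f
    obtain ⟨G, hGg⟩ := hG y
    simp only [← hGg]
    exact map_sum G f s
  have hgneg : ∀ (y : Fin C) (z : Fin C → ℝ), g y (-z) = - g y z := by
    intro y z
    obtain ⟨G, hGg⟩ := hG y
    simp only [← hGg]; exact map_neg G z
  have hgnat : ∀ (y : Fin C) (n : ℕ) (z : Fin C → ℝ), g y ((n : ℝ) • z) = n * g y z := by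
    intro y n z
    obtain ⟨G, hGg⟩ := hG y
    rw [Nat.cast_smul_eq_nsmul]
    simp only [← hGg]
    rw [map_nsmul]
    simp [nsmul_eq_mul]
  have hghom : ∀ (y : Fin C) (a : ℝ) (z : Fin C → ℝ), g y (a • z) = a * g y z := by
    intro y a z
    rcases le_or_gt 0 a with ha | ha
    · set n : ℕ := ⌈a⌉₊ + 1 with hn
      have hnpos : (0:ℝ) < n := by positivity
      have han : a ≤ n := by
        have := Nat.le_ceil a
        push_cast [hn]; linarith
      have h1 : g y (a • z) = g y ((a / n) • ((n:ℝ) • z)) := by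
        rw [smul_smul, div_mul_cancel₀]
        exact ne_of_gt hnpos
      rw [h1, hg01 y (a / n) (by positivity) (by rw [div_le_one hnpos]; exact han),
        hgnat]
      field_simp
    · have h1 : a • z = (-a) • (-z) := by simp
      rw [h1, ]
      have h2 : g y ((-a) • (-z)) = (-a) * g y (-z) := by
        rcases le_or_gt (-a) 0 with h | h
        · linarith
        · -- -a > 0, reuse nonneg case: inline
          set b := -a with hb
          set n : ℕ := ⌈b⌉₊ + 1 with hn
          have hnpos : (0:ℝ) < n := by positivity
          have han : b ≤ n := by
            have := Nat.le_ceil b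
            push_cast [hn]; linarith
          have h1 : g y (b • (-z)) = g y ((b / n) • ((n:ℝ) • (-z))) := by
            rw [smul_smul, div_mul_cancel₀]
            exact ne_of_gt hnpos
          rw [h1, hg01 y (b / n) (by positivity) (by rw [div_le_one hnpos]; exact han),
            hgnat]
          field_simp
      rw [h2, hgneg]; ring
  -- Step 3: coordinate expansion
  have hsingle : ∀ (z : Fin C → ℝ) (i : Fin C),
      (Pi.single i (z i) : Fin C → ℝ) = z i • (Pi.single i 1 : Fin C → ℝ) := by
    intro z i
    funext j
    rcases eq_or_ne j i with h | h
    · subst h; simp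
    · simp [Pi.single_eq_of_ne h]
  have hL : ∀ (z : Fin C → ℝ) (y : Fin C),
      L z y = L 0 y + ∑ i, z i * (L (Pi.single i 1) y - L 0 y) := by
    intro z y
    have hz : z = ∑ i, Pi.single i (z i) := (Finset.univ_sum_single z).symm
    have : g y z = ∑ i, z i * g y (Pi.single i 1) := by
      conv_lhs => rw [hz]
      rw [hgsum]
      refine Finset.sum_congr rfl fun i _ => ?_
      rw [hsingle z i, hghom]
    simp only [hg] at this
    linarith [this]
  -- Step 4: symmetry of constants
  have hperm0 : ∀ (τ : Equiv.Perm (Fin C)) (y : Fin C), L 0 (τ y) = L 0 y := by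
    intro τ y
    have := hperm τ 0 y
    exact this
  have hpermS : ∀ (τ : Equiv.Perm (Fin C)) (i y : Fin C),
      L (Pi.single (τ i) 1) (τ y) = L (Pi.single i 1) y := by
    intro τ i y
    have h := hperm τ (Pi.single i 1) y
    have he : (fun m => (Pi.single i 1 : Fin C → ℝ) (τ.symm m)) = (Pi.single (τ i) 1 : Fin C → ℝ) := by
      funext m
      rcases eq_or_ne m (τ i) with hm | hm
      · subst hm; rw [Equiv.symm_apply_apply, Pi.single_eq_same, Pi.single_eq_same]
      · rw [Pi.single_eq_of_ne hm]
        have : τ.symm m ≠ i := by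
          intro hcon
          apply hm
          rw [← hcon]; simp
        rw [Pi.single_eq_of_ne this]
    rwa [he] at h
  set A : Fin C → Fin C → ℝ := fun y i => L (Pi.single i 1) y - L 0 y with hA
  have hpermA : ∀ (τ : Equiv.Perm (Fin C)) (y i : Fin C), A (τ y) (τ i) = A y i := by
    intro τ y i
    simp only [hA]
    rw [hpermS, hperm0]
  -- fixed indices
  set y0 : Fin C := ⟨0, by omega⟩ with hy0
  set i0 : Fin C := ⟨1, by omega⟩ with hi0
  have hy0i0 : y0 ≠ i0 := by
    simp [hy0, hi0, Fin.ext_iff]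
  -- all L 0 y equal
  have hb : ∀ y : Fin C, L 0 y = L 0 y0 := by
    intro y
    have := hperm0 (Equiv.swap y0 y) y0
    rwa [Equiv.swap_apply_left] at this
  -- diagonal entries equal
  have hAdiag : ∀ y : Fin C, A y y = A y0 y0 := by
    intro y
    have := hpermA (Equiv.swap y0 y) y0 y0
    rwa [Equiv.swap_apply_left] at this
  -- off-diagonal entries equal
  have hAoff : ∀ y i : Fin C, i ≠ y → A y i = A y0 i0 := by
    intro y i hiy
    have hjy : Equiv.swap y0 y i0 ≠ y := by
      intro hcon
      apply hy0i0
      have h2 : Equiv.swap y0 y i0 = Equiv.swap y0 y y0 := by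
        rw [hcon, Equiv.swap_apply_left]
      exact ((Equiv.swap y0 y).injective h2).symm
    have hτy : ((Equiv.swap y0 y).trans (Equiv.swap (Equiv.swap y0 y i0) i)) y0 = y := by
      rw [Equiv.trans_apply, Equiv.swap_apply_left,
        Equiv.swap_apply_of_ne_of_ne (Ne.symm hjy) (Ne.symm hiy)]
    have hτi : ((Equiv.swap y0 y).trans (Equiv.swap (Equiv.swap y0 y i0) i)) i0 = i := by
      rw [Equiv.trans_apply, Equiv.swap_apply_left]
    have := hpermA ((Equiv.swap y0 y).trans (Equiv.swap (Equiv.swap y0 y i0) i)) y0 i0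
    rwa [hτy, hτi] at this
  -- symmetry constraint: column sums of A vanish
  have hsumA : ∀ j : Fin C, ∑ y, A y j = 0 := by
    intro j
    have h1 := hK (Pi.single j 1)
    have h2 := hK 0
    simp only [hA]
    rw [Finset.sum_sub_distrib, h1, h2, sub_self]
  -- the two values
  set α : ℝ := -(A y0 y0) with hα
  set β : ℝ := A y0 i0 with hβ
  have hCR : (2:ℝ) ≤ (C:ℝ) := by exact_mod_cast hC
  have hcol : -α + ((C:ℝ) - 1) * β = 0 := by
    have h := hsumA y0
    have hterm : ∀ y : Fin C, A y y0 = (if y = y0 then -α - β else 0) + β := by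
      intro y
      rcases eq_or_ne y y0 with h | h
      · subst h; rw [if_pos rfl, hα]; ring
      · rw [if_neg h, hAoff y y0 (Ne.symm h), zero_add]
    rw [Finset.sum_congr rfl (fun y _ => hterm y)] at h
    rw [Finset.sum_add_distrib, Finset.sum_ite_eq' Finset.univ y0 (fun _ => -α - β),
      if_pos (Finset.mem_univ y0), Finset.sum_const, Finset.card_univ,
      Fintype.card_fin, nsmul_eq_mul] at h
    linarith
  -- α nonnegative
  have hαnonneg : 0 ≤ α := by
    have h := hmono y0 0 (Pi.single y0 1) (fun k hk => by simp [Pi.single_eq_of_ne hk])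
      (by simp)
    simp only [hα, hA]
    linarith
  -- α positive via nontriviality
  have hαpos : 0 < α := by
    rcases lt_or_eq_of_le hαnonneg with h | h
    · exact h
    · exfalso
      apply hnontriv
      refine ⟨L 0 y0, fun z y => ?_⟩
      have hβ0 : β = 0 := by
        have : ((C:ℝ) - 1) * β = 0 := by linarith
        rcases mul_eq_zero.1 this with h' | h'
        · linarith
        · exact h'
      have hA0 : ∀ y i : Fin C, A y i = 0 := by
        intro y i
        rcases eq_or_ne i y with hiy | hiy
        · subst hiy; rw [hAdiag]; linarith [hα]
        · rw [hAoff y i hiy]; exact hβ0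
      have hz0 : ∑ i, z i * (L (Pi.single i 1) y - L 0 y0) = 0 := by
        refine Finset.sum_eq_zero fun i _ => ?_
        have h3 := hA0 y i
        simp only [hA] at h3
        rw [← hb y, h3, mul_zero]
      rw [hL z y, hb y, hz0, add_zero]
  -- conclusion
  have hCpos : (0:ℝ) < (C:ℝ) := by linarith
  have hC1pos : (0:ℝ) < (C:ℝ) - 1 := by linarith
  refine ⟨α * C / ((C:ℝ) - 1), by positivity, L 0 y0, fun z y => ?_⟩
  have hAval : ∀ i : Fin C, A y i = if i = y then -α else β := by
    intro i
    rcases eq_or_ne i y with hiy | hiy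
    · subst hiy; rw [if_pos rfl, hAdiag, hα]; ring
    · rw [if_neg hiy, hAoff y i hiy]
  have hexp : L z y = L 0 y0 + ∑ i, z i * (if i = y then -α else β) := by
    rw [hL z y, hb y]
    congr 1
    refine Finset.sum_congr rfl fun i _ => ?_
    have h3 := hAval i
    simp only [hA] at h3
    rw [← hb y, h3]
  have hsplit : ∀ i : Fin C, z i * (if i = y then -α else β)
      = (if i = y then z i * (-α - β) else 0) + z i * β := by
    intro i
    rcases eq_or_ne i y with h | h
    · subst h; rw [if_pos rfl, if_pos rfl]; ring
    · rw [if_neg h, if_neg h]; ring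
  have hsum2 : ∑ i, z i * (if i = y then -α else β)
      = z y * (-α - β) + (∑ i, z i) * β := by
    calc ∑ i, z i * (if i = y then -α else β)
        = ∑ i, ((if i = y then z i * (-α - β) else 0) + z i * β) :=
          Finset.sum_congr rfl (fun i _ => hsplit i)
      _ = (∑ i, (if i = y then z i * (-α - β) else 0)) + ∑ i, z i * β :=
          Finset.sum_add_distrib
      _ = z y * (-α - β) + (∑ i, z i) * β := by
          rw [Finset.sum_ite_eq' Finset.univ y (fun i => z i * (-α - β)),
            if_pos (Finset.mem_univ y), ← Finset.sum_mul]
  rw [hexp, hsum2]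
  have hβval : β = α / ((C:ℝ) - 1) := by
    field_simp
    linarith
  rw [hβval]
  field_simp
  ring
end

section
/- Let L(z,y) be differentiable at z' where all components of z' are equal, symmetric, non-increasing, and invariant to permutations, with ∇_z L(z,y)|_{z=z'} ≠ 0. Then the linear function z ↦ (∇_z L(z,y)|_{z=z'})ᵀ z is equal to a positive scalar multiple of the multi-class unhinged loss -z_y + (1/C)∑_{k=1}^C z_k. -/
open Filter Finset

lemma aux_antitone_deriv_nonpos {g : ℝ → ℝ} {d : ℝ} (hg : HasDerivAt g d 0)
    (h : ∀ s t : ℝ, s ≤ t → g t ≤ g s) : d ≤ 0 := by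
  have h1 : Tendsto (slope g 0) (nhdsWithin 0 (Set.Ioi 0)) (nhds d) :=
    (hasDerivAt_iff_tendsto_slope.mp hg).mono_left
      (nhdsWithin_mono _ (fun x hx => ne_of_gt hx))
  refine le_of_tendsto h1 ?_
  filter_upwards [self_mem_nhdsWithin] with t ht
  have h2 : g t ≤ g 0 := h 0 t (le_of_lt ht)
  have : slope g 0 t = (g t - g 0) / (t - 0) := slope_def_field g 0 t
  rw [this]
  exact div_nonpos_of_nonpos_of_nonneg (by linarith) (by simp [le_of_lt (Set.mem_Ioi.mp ht)])

/-- A symmetric, non-increasing, permutation-invariant loss differentiable at a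
point with equal components has a linear approximation there equal to a positive
scalar multiple of the multi-class unhinged loss (provided the gradient is
nonzero). -/
theorem stmt_10 (C : ℕ) (hC : 2 ≤ C) (L : (Fin C → ℝ) → Fin C → ℝ)
    (c₀ : ℝ)
    (hdiff : ∀ y : Fin C, DifferentiableAt ℝ (fun z => L z y) (fun _ => c₀))
    (hsym : ∃ K : ℝ, ∀ z, ∑ k, L z k = K)
    (hmono : ∀ (y : Fin C) (z z' : Fin C → ℝ),
      (∀ k, k ≠ y → z k = z' k) → z y ≤ z' y → L z' y ≤ L z y)
    (hperm : ∀ (τ : Equiv.Perm (Fin C)) (z : Fin C → ℝ) (y : Fin C),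
      L (fun i => z (τ.symm i)) (τ y) = L z y)
    (hgrad : ∃ y : Fin C, fderiv ℝ (fun z => L z y) (fun _ => c₀) ≠ 0) :
    ∃ c : ℝ, 0 < c ∧ ∀ (y : Fin C) (z : Fin C → ℝ),
      fderiv ℝ (fun w => L w y) (fun _ => c₀) z
        = c * (-z y + (1 / (C : ℝ)) * ∑ k, z k) := by
  classical
  have hCpos : 0 < C := by omega
  have hnontriv : Nontrivial (Fin C) := Fin.nontrivial_iff_two_le.mpr hC
  set z' : Fin C → ℝ := fun _ => c₀ with hz'
  set f : Fin C → (Fin C → ℝ) →L[ℝ] ℝ := fun y => fderiv ℝ (fun z => L z y) z' with hf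
  -- permutation equivariance of the gradients
  have hPτ : ∀ (τ : Equiv.Perm (Fin C)) (y : Fin C) (v : Fin C → ℝ),
      f (τ y) (fun i => v (τ.symm i)) = f y v := by
    intro τ y v
    set P : (Fin C → ℝ) →L[ℝ] (Fin C → ℝ) :=
      ContinuousLinearMap.pi (fun i => ContinuousLinearMap.proj (τ.symm i)) with hP
    have hPapp : ∀ w : Fin C → ℝ, P w = fun i => w (τ.symm i) := fun w => rfl
    have hPz' : P z' = z' := rfl
    have hcomp : (fun z => L z y) = (fun z => L z (τ y)) ∘ P := by
      funext z
      simp only [Function.comp_apply, hPapp]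
      exact (hperm τ z y).symm
    have hfy : f y = (f (τ y)).comp P := by
      rw [hf]
      simp only
      conv_lhs => rw [hcomp]
      rw [fderiv_comp z' (by rw [hPz']; exact hdiff (τ y)) P.differentiableAt]
      rw [hPz', P.fderiv]
    rw [← hPapp v, hfy]
    rfl
  -- basis coefficients
  set e : Fin C → (Fin C → ℝ) := fun i => fun j => if i = j then 1 else 0 with he
  set a : Fin C → Fin C → ℝ := fun y i => f y (e i) with ha
  have hae : ∀ (τ : Equiv.Perm (Fin C)) (i : Fin C),
      (fun j => e i (τ.symm j)) = e (τ i) := by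
    intro τ i
    funext j
    simp only [he, Equiv.eq_symm_apply]
  have haperm : ∀ (τ : Equiv.Perm (Fin C)) (y i : Fin C), a (τ y) (τ i) = a y i := by
    intro τ y i
    have := hPτ τ y (e i)
    rw [hae τ i] at this
    exact this
  -- 2-transitivity
  have htrans2 : ∀ y i y' i' : Fin C, i ≠ y → i' ≠ y' →
      ∃ τ : Equiv.Perm (Fin C), τ y = y' ∧ τ i = i' := by
    intro y i y' i' h h'
    set τ₁ := Equiv.swap y y' with hτ₁
    have hj : τ₁ i ≠ y' := by
      intro hc
      have : i = y := by
        have := congrArg τ₁.symm hc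
        simpa [hτ₁, Equiv.symm_apply_apply, Equiv.swap_apply_right] using this
      exact h this
    set τ₂ := Equiv.swap (τ₁ i) i' with hτ₂
    refine ⟨τ₂ * τ₁, ?_, ?_⟩
    · have h1 : τ₁ y = y' := Equiv.swap_apply_left y y'
      simp only [Equiv.Perm.mul_apply, h1, hτ₂]
      exact Equiv.swap_apply_of_ne_of_ne (Ne.symm hj) (Ne.symm h')
    · simp only [Equiv.Perm.mul_apply, hτ₂]
      exact Equiv.swap_apply_left _ _
  -- choose two distinct indices
  obtain ⟨i₀, y₀, hne⟩ := exists_pair_ne (Fin C)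
  set α : ℝ := a y₀ y₀ with hα
  set β : ℝ := a y₀ i₀ with hβ
  have hdiag : ∀ y : Fin C, a y y = α := by
    intro y
    have := haperm (Equiv.swap y₀ y) y₀ y₀
    rwa [Equiv.swap_apply_left] at this
  have hoff : ∀ y i : Fin C, i ≠ y → a y i = β := by
    intro y i hiy
    obtain ⟨τ, hτy, hτi⟩ := htrans2 y₀ i₀ y i hne hiy
    have := haperm τ y₀ i₀
    rwa [hτy, hτi] at this
  -- expansion
  have hexp : ∀ (y : Fin C) (v : Fin C → ℝ), f y v = ∑ i, v i * a y i := by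
    intro y v
    have := LinearMap.pi_apply_eq_sum_univ ((f y) : (Fin C → ℝ) →ₗ[ℝ] ℝ) v
    simpa [ha, he, smul_eq_mul] using this
  -- sum of gradients is zero
  obtain ⟨K, hK⟩ := hsym
  have hsum0 : ∀ v : Fin C → ℝ, ∑ y, f y v = 0 := by
    intro v
    have h1 : fderiv ℝ (fun z => ∑ y, L z y) z' = ∑ y, f y := by
      rw [hf]
      exact fderiv_fun_sum (fun y _ => hdiff y)
    have h2 : (fun z : Fin C → ℝ => ∑ y, L z y) = fun _ => K := funext hK
    rw [h2, fderiv_fun_const] at h1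
    have := congrArg (fun (g : (Fin C → ℝ) →L[ℝ] ℝ) => g v) h1.symm
    simpa [ContinuousLinearMap.sum_apply] using this
  -- relation α + (C-1)β = 0
  have hrel : α + ((C : ℝ) - 1) * β = 0 := by
    have h1 := hsum0 (e y₀)
    have h2 : ∀ y : Fin C, f y (e y₀) = a y y₀ := fun y => rfl
    rw [Finset.sum_congr rfl (fun y _ => h2 y)] at h1
    rw [← Finset.add_sum_erase _ _ (Finset.mem_univ y₀)] at h1
    rw [hdiag y₀] at h1
    have h3 : ∑ y ∈ Finset.univ.erase y₀, a y y₀ = ((C : ℝ) - 1) * β := by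
      rw [Finset.sum_congr rfl (fun y hy => hoff y y₀
        (Ne.symm (Finset.ne_of_mem_erase hy)))]
      rw [Finset.sum_const, Finset.card_erase_of_mem (Finset.mem_univ y₀),
        Finset.card_univ, Fintype.card_fin, nsmul_eq_mul,
        Nat.cast_sub (by omega : 1 ≤ C), Nat.cast_one]
    rw [h3] at h1
    exact h1
  -- α ≤ 0 from monotonicity
  have hαle : α ≤ 0 := by
    set w := e y₀ with hw
    set γ : ℝ → (Fin C → ℝ) := fun t => z' + t • w with hγ
    have hγ0 : γ 0 = z' := by simp [hγ]
    have hγd : HasDerivAt γ w 0 := by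
      simpa [hγ] using ((hasDerivAt_id (0:ℝ)).smul_const w).const_add z'
    have hgd : HasDerivAt (fun t => L (γ t) y₀) (f y₀ w) 0 := by
      have hF : HasFDerivAt (fun z => L z y₀) (f y₀) (γ 0) := by
        rw [hγ0]; exact (hdiff y₀).hasFDerivAt
      exact hF.comp_hasDerivAt 0 hγd
    have hanti : ∀ s t : ℝ, s ≤ t → L (γ t) y₀ ≤ L (γ s) y₀ := by
      intro s t hst
      refine hmono y₀ (γ s) (γ t) ?_ ?_
      · intro k hk
        simp [hγ, hw, he, Ne.symm hk]
      · simp only [hγ, hw, he, Pi.add_apply, Pi.smul_apply, smul_eq_mul,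
          eq_self_iff_true, if_true]
        linarith
    have := aux_antitone_deriv_nonpos hgd hanti
    exact this
  -- β > 0
  have hβpos : 0 < β := by
    have hβnonneg : 0 ≤ β := by
      by_contra hneg
      push_neg at hneg
      have hC' : (2:ℝ) ≤ (C:ℝ) := by exact_mod_cast hC
      have h1 : ((C:ℝ) - 1) * β < 0 := mul_neg_of_pos_of_neg (by linarith) hneg
      linarith
    rcases lt_or_eq_of_le hβnonneg with h | h
    · exact h
    · exfalso
      have hα0 : α = 0 := by rw [← h] at hrel; linarith
      obtain ⟨y, hy⟩ := hgrad
      apply hy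
      ext v
      have := hexp y v
      have hz : ∀ i : Fin C, a y i = 0 := by
        intro i
        by_cases hiy : i = y
        · rw [hiy, hdiag y, hα0]
        · rw [hoff y i hiy, ← h]
      simp only [hz, mul_zero, Finset.sum_const_zero] at this
      simpa [hf] using this
  -- conclusion
  refine ⟨(C : ℝ) * β, by positivity, ?_⟩
  intro y z
  have hfy : f y z = ∑ i, z i * a y i := hexp y z
  have hsplit : ∑ i, z i * a y i = z y * α + (∑ i ∈ Finset.univ.erase y, z i) * β := by
    rw [← Finset.add_sum_erase _ _ (Finset.mem_univ y), hdiag y, Finset.sum_mul]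
    congr 1
    exact Finset.sum_congr rfl (fun i hi => by
      rw [hoff y i (Finset.ne_of_mem_erase hi)])
  have herase : ∑ i ∈ Finset.univ.erase y, z i = (∑ k, z k) - z y := by
    rw [← Finset.add_sum_erase _ _ (Finset.mem_univ y)]; ring
  have hCne : (C : ℝ) ≠ 0 := Nat.cast_ne_zero.mpr (by omega)
  have : f y z = z y * α + ((∑ k, z k) - z y) * β := by
    rw [hfy, hsplit, herase]
  rw [hf] at this
  simp only at this
  rw [this]
  have hαval : α = -((C : ℝ) - 1) * β := by linarith
  rw [hαval]
  field_simp
  ring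
end

section
/- Let D̄ be the corrupted distribution with D̄_x = D_x and conditional label distribution p·U({1,...,C}) + (1-p)·D_{y|x} for 0 ≤ p < 1. Then for any classifier h, the corrupted risk satisfies L_D̄(h) = (p/C)·E_{x∼D_x}[∑_{k=1}^C L(h(x),k)] + (1-p)·L_D(h). In particular, if L is symmetric with ∑_{k=1}^C L(z,k) = K constant, then L_D̄(h) = (p/C)K + (1-p)L_D(h), so every minimizer of L_D̄ over a hypothesis class is a minimizer of L_D and conversely. -/
open MeasureTheory
open scoped ENNReal

/-!
Mixing in uniform label noise with weight `p` contributes `p/C` times the expected total loss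
`E_x[∑_k L(h x, k)]`, by Fubini against the finite uniform measure on labels, and scales the clean
risk by `1 - p`. For a symmetric loss the first term is the constant `(p/C)·K`, so the corrupted
risk is an increasing affine function of the clean risk and has the same minimizers.
-/

theorem integral_smul_count {β E : Type*} [Fintype β] [MeasurableSpace β]
    [MeasurableSingletonClass β] [NormedAddCommGroup E] [NormedSpace ℝ E] [CompleteSpace E]
    (c : ℝ≥0∞) (f : β → E) :
    ∫ k, f k ∂(c • Measure.count) = c.toReal • ∑ k, f k := by
  rw [integral_smul_measure, integral_count]

theorem integral_prod_smul_count {α β E : Type*} [MeasurableSpace α] [Fintype β]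
    [MeasurableSpace β] [MeasurableSingletonClass β] [NormedAddCommGroup E] [NormedSpace ℝ E]
    [CompleteSpace E] {μ : Measure α} [SFinite μ] (c : ℝ≥0∞) {f : α × β → E}
    (hf : Integrable f (μ.prod (c • Measure.count))) :
    ∫ z, f z ∂(μ.prod (c • Measure.count)) = c.toReal • ∫ x, ∑ k, f (x, k) ∂μ := by
  simp_rw [integral_prod f hf, integral_smul_count, integral_smul]

theorem integral_ofReal_smul_add_ofReal_smul {α E : Type*} [MeasurableSpace α]
    [NormedAddCommGroup E] [NormedSpace ℝ E] {μ ν : Measure α} {f : α → E} {a b : ℝ}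
    (ha : 0 ≤ a) (hb : 0 ≤ b) (hμ : Integrable f μ) (hν : Integrable f ν) :
    ∫ x, f x ∂(ENNReal.ofReal a • μ + ENNReal.ofReal b • ν)
      = a • ∫ x, f x ∂μ + b • ∫ x, f x ∂ν := by
  rw [integral_add_measure (hμ.smul_measure ENNReal.ofReal_ne_top)
    (hν.smul_measure ENNReal.ofReal_ne_top), integral_smul_measure, integral_smul_measure,
    ENNReal.toReal_ofReal ha, ENNReal.toReal_ofReal hb]

theorem forall_le_iff_of_eq_const_add_mul {ι : Type*} {S : Set ι} {f g : ι → ℝ} {a t : ℝ}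
    (ht : 0 < t) (hfg : ∀ i ∈ S, g i = a + t * f i) {i : ι} (hi : i ∈ S) :
    (∀ j ∈ S, g i ≤ g j) ↔ (∀ j ∈ S, f i ≤ f j) := by
  refine forall₂_congr fun j hj => ?_
  rw [hfg i hi, hfg j hj, add_le_add_iff_left, mul_le_mul_iff_right₀ ht]

theorem stmt_12_general {α : Type*} [MeasurableSpace α] (C : ℕ)
    (D : Measure (α × Fin C)) [IsProbabilityMeasure D]
    (L : (Fin C → ℝ) → Fin C → ℝ) (p : ℝ) (hp0 : 0 ≤ p) (hp1 : p < 1)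
    (H : Set (α → Fin C → ℝ)) :
    let Dx : Measure α := D.map Prod.fst
    let uniform : Measure (Fin C) := ((C : ℝ≥0∞))⁻¹ • Measure.count
    let Dbar : Measure (α × Fin C) :=
      ENNReal.ofReal p • (Dx.prod uniform) + ENNReal.ofReal (1 - p) • D
    let riskD : (α → Fin C → ℝ) → ℝ :=
      fun h => ∫ pr, L (h pr.1) pr.2 ∂D
    let riskDbar : (α → Fin C → ℝ) → ℝ :=
      fun h => ∫ pr, L (h pr.1) pr.2 ∂Dbar
    -- integrability assumptions for every classifier of the hypothesis class
    (∀ h ∈ H, Integrable (fun pr => L (h pr.1) pr.2) D) →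
    (∀ h ∈ H, Integrable (fun pr => L (h pr.1) pr.2) (Dx.prod uniform)) →
    -- decomposition of the corrupted risk
    ((∀ h ∈ H, riskDbar h
        = (p / (C : ℝ)) * (∫ x, ∑ k, L (h x) k ∂Dx) + (1 - p) * riskD h) ∧
    -- under the symmetry condition, minimizers over `H` coincide
    (∀ K : ℝ, (∀ z, ∑ k, L z k = K) →
      ∀ h ∈ H, ((∀ h' ∈ H, riskDbar h ≤ riskDbar h')
        ↔ (∀ h' ∈ H, riskD h ≤ riskD h')))) := by
  intro Dx uniform Dbar riskD riskDbar hintD hintProd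
  have : IsProbabilityMeasure Dx := Measure.isProbabilityMeasure_map measurable_fst.aemeasurable
  have hdecomp : ∀ h ∈ H, riskDbar h
      = (p / (C : ℝ)) * (∫ x, ∑ k, L (h x) k ∂Dx) + (1 - p) * riskD h := by
    intro h hh
    rw [show riskDbar h = _ from integral_ofReal_smul_add_ofReal_smul hp0 (by linarith)
      (hintProd h hh) (hintD h hh), integral_prod_smul_count _ (hintProd h hh)]
    simp [riskD, div_eq_mul_inv, mul_assoc]
  refine ⟨hdecomp, fun K hK h hh => forall_le_iff_of_eq_const_add_mul (a := p / C * K)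
    (t := 1 - p) (by linarith) (fun h' hh' => ?_) hh⟩
  simp [hdecomp h' hh', hK]

/-- Risk under uniform label noise: the corrupted risk decomposes as
`(p/C)·E_x[∑_k L(h(x),k)] + (1-p)·L_D(h)`, and under the symmetry condition the
minimizers of the corrupted risk over a hypothesis class coincide with the
minimizers of the clean risk. -/
theorem stmt_12 {α : Type*} [MeasurableSpace α] (C : ℕ) (hC : 1 ≤ C)
    (D : Measure (α × Fin C)) [IsProbabilityMeasure D]
    (L : (Fin C → ℝ) → Fin C → ℝ) (p : ℝ) (hp0 : 0 ≤ p) (hp1 : p < 1)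
    (H : Set (α → Fin C → ℝ)) :
    let Dx : Measure α := D.map Prod.fst
    let uniform : Measure (Fin C) := ((C : ℝ≥0∞))⁻¹ • Measure.count
    let Dbar : Measure (α × Fin C) :=
      ENNReal.ofReal p • (Dx.prod uniform) + ENNReal.ofReal (1 - p) • D
    let riskD : (α → Fin C → ℝ) → ℝ :=
      fun h => ∫ pr, L (h pr.1) pr.2 ∂D
    let riskDbar : (α → Fin C → ℝ) → ℝ :=
      fun h => ∫ pr, L (h pr.1) pr.2 ∂Dbar
    -- integrability assumptions for every classifier of the hypothesis class
    (∀ h ∈ H, Integrable (fun pr => L (h pr.1) pr.2) D) →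
    (∀ h ∈ H, Integrable (fun pr => L (h pr.1) pr.2) (Dx.prod uniform)) →
    -- decomposition of the corrupted risk
    ((∀ h ∈ H, riskDbar h
        = (p / (C : ℝ)) * (∫ x, ∑ k, L (h x) k ∂Dx) + (1 - p) * riskD h) ∧
    -- under the symmetry condition, minimizers over `H` coincide
    (∀ K : ℝ, (∀ z, ∑ k, L z k = K) →
      ∀ h ∈ H, ((∀ h' ∈ H, riskDbar h ≤ riskDbar h')
        ↔ (∀ h' ∈ H, riskD h ≤ riskD h')))) :=
  stmt_12_general C D L p hp0 hp1 H
end
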